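/- arXiv:1403.4085 — 2 statements merged into one kernel-verified Lean document; each statement's English description precedes it below -/
import Mathlib

section
/- Let d ≥ 1, 1 < p < ∞, 1 < q ≤ ∞, and let Z = {N_1 < N_2 < …} ⊂ ℕ be an increasing sequence. Let (K_N)_{N∈ℕ} be kernels in ℓ¹(ℤ^d) and suppose that ‖ ∑_{N_k ≤ N ≤ N_{k+1}} ‖K_{N+1} − K_N‖_{ℓ¹(ℤ^d)} ‖_{ℓ^{min(p,q)}_k} < ∞. Then there is a constant C = C(p, q, and the above ℓ^{min(p,q)} norm) such that for all f ∈ ℓ^p(ℤ^d): ‖ ( ∑_j ‖K_N * f‖_{V^q_{N∈[N_j, N_{j+1}]}}^q )^{1/q} ‖_{ℓ^p(ℤ^d)} ≤ C ‖f‖_{ℓ^p(ℤ^d)}, i.e. the short q-variation of N ↦ K_N * f with respect to Z is bounded on ℓ^p. -/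
open MeasureTheory ENNReal
open scoped NNReal

/-- The homogeneous `q`-variation norm for an exponent `q ∈ (1, ∞]`; for `q = ∞` it is the
supremum of `‖u t - u s‖` over `s < t`. -/
noncomputable def hVarE {ι : Type*} [LinearOrder ι] {E : Type*} [NormedAddCommGroup E]
    (q : ℝ≥0∞) (u : ι → E) : ℝ≥0∞ :=
  if q = ⊤ then ⨆ (s : ι) (t : ι) (_ : s < t), (‖u t - u s‖₊ : ℝ≥0∞)
  else ⨆ (J : ℕ) (t : Fin (J + 1) → ι) (_ : StrictMono t),
    (∑ j : Fin J, (‖u (t j.succ) - u (t j.castSucc)‖₊ : ℝ≥0∞) ^ q.toReal) ^ (1 / q.toReal)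

/-- The short `q`-variation of `u : ℕ → E` with respect to the increasing sequence
`Nseq : ℕ → ℕ`, i.e. `(∑_j ‖u‖_{V^q([N_j, N_{j+1}])}^q)^{1/q}` (with the obvious
modification for `q = ∞`). -/
noncomputable def sVarE {E : Type*} [NormedAddCommGroup E]
    (q : ℝ≥0∞) (Nseq : ℕ → ℕ) (u : ℕ → E) : ℝ≥0∞ :=
  if q = ⊤ then
    ⨆ j : ℕ, hVarE ⊤ (fun n : {n : ℕ // n ∈ Set.Icc (Nseq j) (Nseq (j + 1))} => u n)
  else
    (∑' j : ℕ,
      hVarE q (fun n : {n : ℕ // n ∈ Set.Icc (Nseq j) (Nseq (j + 1))} => u n) ^ q.toReal)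
      ^ (1 / q.toReal)

/-!
Each block variation of `N ↦ (K_N * f)(x)` is at most the sum of its increments, hence at most
`(D_j * |f|)(x)` with `D_j = ∑_{N in block j} |K_{N+1} - K_N|`. With `ρ = min(p, q)`, the
embedding `ℓ^ρ ⊂ ℓ^q` bounds the short variation by `‖j ↦ (D_j * |f|)(x)‖_{ℓ^ρ}`; Minkowski's
inequality in `ℓ^{p/ρ}` swaps this `ℓ^ρ_j` norm with the outer `ℓ^p_x` norm, and Young's
inequality `‖D_j * |f|‖_p ≤ ‖D_j‖_1 ‖f‖_p` finishes the proof.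
-/

noncomputable def ellNorm {ι : Type*} (r : ℝ) (a : ι → ℝ≥0∞) : ℝ≥0∞ :=
  (∑' i, a i ^ r) ^ (1 / r)

namespace ENNReal

variable {ι X : Type*}

lemma iSup_rpow (f : ι → ℝ≥0∞) {r : ℝ} (hr : 0 < r) : (⨆ i, f i) ^ r = ⨆ i, f i ^ r :=
  (orderIsoRpow r hr).map_iSup f

lemma tsum_iSup_of_monotone {κ : Type*} [Preorder κ] [IsDirectedOrder κ] (g : κ → X → ℝ≥0∞)
    (hg : Monotone g) : ∑' x, ⨆ k, g k x = ⨆ k, ∑' x, g k x := by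
  simp_rw [ENNReal.tsum_eq_iSup_sum]
  rw [iSup_comm]
  exact iSup_congr fun s => finsetSum_iSup_of_monotone fun x _ _ h => hg h x

lemma tsum_rpow_le_rpow_tsum (a : ι → ℝ≥0∞) {t : ℝ} (ht : 1 ≤ t) :
    ∑' i, a i ^ t ≤ (∑' i, a i) ^ t := by
  rw [ENNReal.tsum_eq_iSup_sum, ENNReal.tsum_eq_iSup_sum, iSup_rpow _ (by linarith)]
  refine iSup_mono fun s => ?_
  induction s using Finset.cons_induction with
  | empty => simp [zero_rpow_of_pos (by linarith : (0 : ℝ) < t)]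
  | cons i s hi ih =>
    rw [Finset.sum_cons, Finset.sum_cons]
    exact (add_le_add le_rfl ih).trans (add_rpow_le_rpow_add _ _ ht)

end ENNReal

section ellNorm

variable {ι X : Type*}

lemma ellNorm_one (a : ι → ℝ≥0∞) : ellNorm 1 a = ∑' i, a i := by simp [ellNorm]

lemma le_ellNorm (a : ι → ℝ≥0∞) {r : ℝ} (hr : 0 < r) (i : ι) : a i ≤ ellNorm r a := by
  calc a i = (a i ^ r) ^ (1 / r) := by rw [one_div, ENNReal.rpow_rpow_inv hr.ne']
    _ ≤ ellNorm r a := by unfold ellNorm; gcongr; exact ENNReal.le_tsum i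

lemma ellNorm_mono {a b : ι → ℝ≥0∞} (h : a ≤ b) {r : ℝ} (hr : 0 ≤ r) :
    ellNorm r a ≤ ellNorm r b := by
  unfold ellNorm; gcongr with i; exact h i

lemma ellNorm_le_ellNorm_of_exponent_le (a : ι → ℝ≥0∞) {ρ r : ℝ} (hρ : 0 < ρ) (hρr : ρ ≤ r) :
    ellNorm r a ≤ ellNorm ρ a := by
  have hr : 0 < r := hρ.trans_le hρr
  calc ellNorm r a = (∑' i, (a i ^ ρ) ^ (r / ρ)) ^ (1 / r) := by
        simp_rw [ellNorm, ← ENNReal.rpow_mul, mul_div_cancel₀ r hρ.ne']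
    _ ≤ ((∑' i, a i ^ ρ) ^ (r / ρ)) ^ (1 / r) := by
        gcongr; exact ENNReal.tsum_rpow_le_rpow_tsum _ ((one_le_div hρ).mpr hρr)
    _ = ellNorm ρ a := by
        rw [ellNorm, ← ENNReal.rpow_mul]; congr 1; field_simp

lemma ellNorm_const_mul (c : ℝ≥0∞) (a : ι → ℝ≥0∞) {r : ℝ} (hr : 0 < r) :
    ellNorm r (fun i => c * a i) = c * ellNorm r a := by
  simp_rw [ellNorm, ENNReal.mul_rpow_of_nonneg _ _ hr.le, ENNReal.tsum_mul_left,
    ENNReal.mul_rpow_of_nonneg _ _ (one_div_nonneg.mpr hr.le), one_div,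
    ENNReal.rpow_rpow_inv hr.ne']

lemma ellNorm_add_le (a b : ι → ℝ≥0∞) {s : ℝ} (hs : 1 ≤ s) :
    ellNorm s (a + b) ≤ ellNorm s a + ellNorm s b := by
  have hs0 : 0 < 1 / s := by positivity
  rw [ellNorm, ENNReal.tsum_eq_iSup_sum, ENNReal.iSup_rpow _ hs0]
  refine iSup_le fun F => (ENNReal.Lp_add_le F a b hs).trans ?_
  unfold ellNorm; gcongr <;> exact ENNReal.sum_le_tsum F

lemma ellNorm_finsetSum_le (F : Finset X) (c : X → ι → ℝ≥0∞) {s : ℝ} (hs : 1 ≤ s) :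
    ellNorm s (∑ i ∈ F, c i) ≤ ∑ i ∈ F, ellNorm s (c i) := by
  induction F using Finset.cons_induction with
  | empty =>
    simp [ellNorm, ENNReal.zero_rpow_of_pos (by linarith : (0 : ℝ) < s),
      ENNReal.zero_rpow_of_pos (by positivity : (0 : ℝ) < s⁻¹)]
  | cons i F hi ih =>
    simp only [Finset.sum_cons]
    exact (ellNorm_add_le _ _ hs).trans (add_le_add le_rfl ih)

lemma ellNorm_tsum_le (c : ι → X → ℝ≥0∞) {s : ℝ} (hs : 1 ≤ s) :
    ellNorm s (fun x => ∑' i, c i x) ≤ ∑' i, ellNorm s (c i) := by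
  have hs0 : 0 < s := by linarith
  calc ellNorm s (fun x => ∑' i, c i x)
      = ⨆ F : Finset ι, ellNorm s (∑ i ∈ F, c i) := by
        have hmono : Monotone fun (F : Finset ι) x => (∑ i ∈ F, c i x) ^ s :=
          fun F G h x => ENNReal.rpow_le_rpow (Finset.sum_le_sum_of_subset h) hs0.le
        simp_rw [ellNorm, ENNReal.tsum_eq_iSup_sum (f := fun i => c i _),
          ENNReal.iSup_rpow _ hs0, ENNReal.tsum_iSup_of_monotone _ hmono,
          ENNReal.iSup_rpow _ (one_div_pos.mpr hs0), Finset.sum_apply]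
    _ ≤ ⨆ F : Finset ι, ∑ i ∈ F, ellNorm s (c i) :=
        iSup_mono fun F => ellNorm_finsetSum_le F c hs
    _ ≤ ∑' i, ellNorm s (c i) := iSup_le fun F => ENNReal.sum_le_tsum F

lemma ellNorm_rpow_eq_tsum (a : ι → ℝ≥0∞) {r : ℝ} (hr : 0 < r) :
    ellNorm r a ^ r = ∑' i, a i ^ r := by
  rw [ellNorm, one_div, ENNReal.rpow_inv_rpow hr.ne']

lemma ellNorm_comp_rpow (a : ι → ℝ≥0∞) {ρ s : ℝ} (hρ : 0 < ρ) (hs : 0 < s) :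
    ellNorm s (fun i => a i ^ ρ) = ellNorm (ρ * s) a ^ ρ := by
  simp_rw [ellNorm, ← ENNReal.rpow_mul]
  congr 1; field_simp

lemma ellNorm_ellNorm_swap_le (B : ι → X → ℝ≥0∞) {ρ p : ℝ} (hρ : 0 < ρ) (hρp : ρ ≤ p) :
    ellNorm p (fun x => ellNorm ρ (fun j => B j x)) ≤ ellNorm ρ (fun j => ellNorm p (B j)) := by
  have hs : 1 ≤ p / ρ := (one_le_div hρ).mpr hρp
  have hp : ρ * (p / ρ) = p := mul_div_cancel₀ p hρ.ne'
  have key := ellNorm_tsum_le (fun j x => B j x ^ ρ) hs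
  simp_rw [← ellNorm_rpow_eq_tsum _ hρ, ellNorm_comp_rpow _ hρ (by linarith : 0 < p / ρ),
    hp] at key
  rwa [← ellNorm_rpow_eq_tsum _ hρ, ENNReal.rpow_le_rpow_iff hρ] at key

lemma ellNorm_conv_le {G : Type*} [AddGroup G] (g F : G → ℝ≥0∞) {p : ℝ} (hp : 1 ≤ p) :
    ellNorm p (fun x => ∑' y, g y * F (x - y)) ≤ (∑' y, g y) * ellNorm p F := by
  have htransl : ∀ y, ellNorm p (fun x => F (x - y)) = ellNorm p F := fun y =>
    congrArg (· ^ (1 / p)) ((Equiv.subRight y).tsum_eq fun x => F x ^ p)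
  calc ellNorm p (fun x => ∑' y, g y * F (x - y))
      ≤ ∑' y, ellNorm p (fun x => g y * F (x - y)) := ellNorm_tsum_le _ hp
    _ = (∑' y, g y) * ellNorm p F := by
        simp_rw [ellNorm_const_mul _ _ (by linarith : (0 : ℝ) < p), htransl,
          ENNReal.tsum_mul_right]

end ellNorm

lemma enorm_mul_le_enorm_mul_enorm {R : Type*} [NormedRing R] (a b : R) :
    ‖a * b‖ₑ ≤ ‖a‖ₑ * ‖b‖ₑ := by
  simpa [enorm_eq_nnnorm] using ENNReal.coe_le_coe.mpr (nnnorm_mul_le a b)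

lemma edist_tsum_mul_le {Y R : Type*} [NormedRing R] {k k' f : Y → R}
    (hk : Summable fun y => k y * f y) (hk' : Summable fun y => k' y * f y) :
    edist (∑' y, k y * f y) (∑' y, k' y * f y) ≤ ∑' y, edist (k y) (k' y) * ‖f y‖ₑ := by
  rw [edist_eq_enorm_sub, ← hk.tsum_sub hk']
  refine enorm_tsum_le_tsum_enorm.trans (ENNReal.tsum_le_tsum fun y => ?_)
  rw [← sub_mul, edist_eq_enorm_sub]
  exact enorm_mul_le_enorm_mul_enorm _ _

section Variation

variable {E : Type*}

lemma sum_edist_le_sum_Ico_edist [PseudoEMetricSpace E] (u : ℕ → E) :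
    ∀ {J : ℕ} (t : Fin (J + 1) → ℕ), Monotone t →
      ∑ j : Fin J, edist (u (t j.castSucc)) (u (t j.succ))
        ≤ ∑ N ∈ Finset.Ico (t 0) (t (Fin.last J)), edist (u N) (u (N + 1))
  | 0, _, _ => by simp
  | J + 1, t, ht => by
    have hlast : t (Fin.last J).castSucc ≤ t (Fin.last (J + 1)) := ht (Fin.castSucc_le_succ _)
    rw [Fin.sum_univ_castSucc, ← Finset.sum_Ico_consecutive _ (ht (Fin.zero_le _)) hlast]
    gcongr
    · simpa using sum_edist_le_sum_Ico_edist u (t ∘ Fin.castSucc)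
        (ht.comp Fin.strictMono_castSucc.monotone)
    · simpa using edist_le_Ico_sum_edist u hlast

lemma hVarE_Icc_le_sum_edist [NormedAddCommGroup E] (u : ℕ → E) (lo hi : ℕ) {q : ℝ≥0∞}
    (hq : 1 ≤ q) :
    hVarE q (fun n : {n : ℕ // n ∈ Set.Icc lo hi} => u n)
      ≤ ∑ N ∈ Finset.Ico lo hi, edist (u N) (u (N + 1)) := by
  have henorm : ∀ a b : E, (‖b - a‖₊ : ℝ≥0∞) = edist a b := fun a b => by
    rw [edist_comm, edist_eq_enorm_sub]; rfl
  have hsub : ∀ s t : {n : ℕ // n ∈ Set.Icc lo hi}, Finset.Ico (s : ℕ) t ⊆ Finset.Ico lo hi :=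
    fun s t => Finset.Ico_subset_Ico s.2.1 t.2.2
  unfold hVarE
  split_ifs with hqtop
  · refine iSup₂_le fun s t => iSup_le fun hst => ?_
    rw [henorm]
    exact (edist_le_Ico_sum_edist u (le_of_lt hst)).trans
      (Finset.sum_le_sum_of_subset (hsub s t))
  · have hr : 1 ≤ q.toReal := by
      simpa using (ENNReal.ofReal_le_iff_le_toReal hqtop).mp (by simpa using hq)
    refine iSup₂_le fun J t => iSup_le fun ht => ?_
    calc (∑ j : Fin J, (‖u (t j.succ) - u (t j.castSucc)‖₊ : ℝ≥0∞) ^ q.toReal) ^ (1 / q.toReal)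
        = ellNorm q.toReal (fun j : Fin J => edist (u (t j.castSucc)) (u (t j.succ))) := by
          simp only [ellNorm, tsum_fintype, henorm]
      _ ≤ ∑ j : Fin J, edist (u (t j.castSucc)) (u (t j.succ)) :=
          (ellNorm_le_ellNorm_of_exponent_le _ zero_lt_one hr).trans_eq
            (by rw [ellNorm_one, tsum_fintype])
      _ ≤ ∑ N ∈ Finset.Ico lo hi, edist (u N) (u (N + 1)) :=
          (sum_edist_le_sum_Ico_edist u (fun j => (t j : ℕ)) fun _ _ h => ht.monotone h).trans
            (Finset.sum_le_sum_of_subset (hsub _ _))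

lemma sVarE_le_ellNorm [NormedAddCommGroup E] {q : ℝ≥0∞} (Nseq : ℕ → ℕ) (u : ℕ → E)
    (B : ℕ → ℝ≥0∞)
    (hB : ∀ j, hVarE q (fun n : {n : ℕ // n ∈ Set.Icc (Nseq j) (Nseq (j + 1))} => u n) ≤ B j)
    {ρ : ℝ} (hρ : 0 < ρ) (hρq : ENNReal.ofReal ρ ≤ q) :
    sVarE q Nseq u ≤ ellNorm ρ B := by
  unfold sVarE
  split_ifs with hqtop
  · exact iSup_le fun j => (hqtop ▸ hB j).trans (le_ellNorm B hρ j)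
  · have hρq' : ρ ≤ q.toReal := (ENNReal.ofReal_le_iff_le_toReal hqtop).mp hρq
    exact (ellNorm_mono hB (hρ.le.trans hρq')).trans
      (ellNorm_le_ellNorm_of_exponent_le B hρ hρq')

end Variation

lemma toReal_min_ofReal {p : ℝ} {q : ℝ≥0∞} (hp : 0 < p) (hq : 0 < q) :
    0 < (min (ENNReal.ofReal p) q).toReal ∧ (min (ENNReal.ofReal p) q).toReal ≤ p ∧
      ENNReal.ofReal (min (ENNReal.ofReal p) q).toReal ≤ q := by
  have hne : min (ENNReal.ofReal p) q ≠ ⊤ :=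
    ne_top_of_le_ne_top ENNReal.ofReal_ne_top (min_le_left _ _)
  rw [ENNReal.ofReal_toReal hne]
  refine ⟨ENNReal.toReal_pos (lt_min (by simpa using hp) hq).ne' hne, ?_, min_le_right _ _⟩
  simpa [ENNReal.toReal_ofReal hp.le] using ENNReal.toReal_mono ENNReal.ofReal_ne_top
    (min_le_left (ENNReal.ofReal p) q)

lemma norm_le_toReal_ellNorm {Y F : Type*} [SeminormedAddCommGroup F] (f : Y → F) {p : ℝ}
    (hp : 0 < p) (hf : ellNorm p (fun x => ‖f x‖ₑ) ≠ ⊤) (y : Y) :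
    ‖f y‖ ≤ (ellNorm p (fun x => ‖f x‖ₑ)).toReal := by
  simpa using ENNReal.toReal_mono hf (le_ellNorm (fun x => ‖f x‖ₑ) hp y)

lemma tsum_enorm_eq_ofReal_tsum_norm {Y F : Type*} [SeminormedAddCommGroup F] {g : Y → F}
    (hg : Summable fun y => ‖g y‖) : ∑' y, ‖g y‖ₑ = ENNReal.ofReal (∑' y, ‖g y‖) := by
  simp_rw [ENNReal.ofReal_tsum_of_nonneg (fun _ => norm_nonneg _) hg, ofReal_norm]

lemma summable_mul_of_summable_norm_of_bounded {Y R : Type*} [NormedRing R] [CompleteSpace R]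
    {k f : Y → R} (hk : Summable fun y => ‖k y‖) {M : ℝ} (hf : ∀ y, ‖f y‖ ≤ M) :
    Summable fun y => k y * f y :=
  .of_norm_bounded (hk.mul_right M) fun y =>
    (norm_mul_le _ _).trans (mul_le_mul_of_nonneg_left (hf y) (norm_nonneg _))

lemma tsum_sum_edist_le {Y E : Type*} [SeminormedAddCommGroup E] {K : ℕ → Y → E}
    (hK : ∀ N, Summable fun y => ‖K N y‖) (a b : ℕ) :
    ∑' y, ∑ N ∈ Finset.Ico a b, edist (K N y) (K (N + 1) y)
      ≤ ENNReal.ofReal (∑ N ∈ Finset.Icc a b, ∑' y, ‖K (N + 1) y - K N y‖) := by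
  have hedist : ∀ N, ∑' y, edist (K N y) (K (N + 1) y)
      = ENNReal.ofReal (∑' y, ‖K (N + 1) y - K N y‖) := fun N => by
    rw [tsum_congr fun y => by rw [edist_comm, edist_eq_enorm_sub]]
    exact tsum_enorm_eq_ofReal_tsum_norm (.of_nonneg_of_le (fun _ => norm_nonneg _)
      (fun _ => norm_sub_le _ _) ((hK (N + 1)).add (hK N)))
  rw [Summable.tsum_finsetSum fun _ _ => ENNReal.summable,
    ENNReal.ofReal_sum_of_nonneg fun _ _ => tsum_nonneg fun _ => norm_nonneg _]
  simp_rw [hedist]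
  exact Finset.sum_le_sum_of_subset Finset.Ico_subset_Icc_self

section Convolution

variable {G R : Type*} [AddGroup G] [NormedRing R] [CompleteSpace R] {K : ℕ → G → R}

lemma sVarE_conv_le (hK : ∀ N, Summable fun y => ‖K N y‖) {f : G → R} {M : ℝ}
    (hf : ∀ x, ‖f x‖ ≤ M) {q : ℝ≥0∞} (hq : 1 ≤ q) (Nseq : ℕ → ℕ) {ρ : ℝ} (hρ : 0 < ρ)
    (hρq : ENNReal.ofReal ρ ≤ q) (x : G) :
    sVarE q Nseq (fun N => ∑' y, K N y * f (x - y))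
      ≤ ellNorm ρ (fun j => ∑' y,
          (∑ N ∈ Finset.Ico (Nseq j) (Nseq (j + 1)), edist (K N y) (K (N + 1) y)) *
            ‖f (x - y)‖ₑ) := by
  have hsummable : ∀ N, Summable fun y => K N y * f (x - y) := fun N =>
    summable_mul_of_summable_norm_of_bounded (hK N) fun y => hf (x - y)
  refine (sVarE_le_ellNorm Nseq _ _ (fun _ => hVarE_Icc_le_sum_edist _ _ _ hq) hρ hρq).trans
    (ellNorm_mono (fun j => ?_) hρ.le)
  simp only [Finset.sum_mul]
  rw [Summable.tsum_finsetSum fun _ _ => ENNReal.summable]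
  exact Finset.sum_le_sum fun N _ =>
    edist_tsum_mul_le (hsummable N) (hsummable (N + 1))

lemma ellNorm_sVarE_conv_le (hK : ∀ N, Summable fun y => ‖K N y‖) {p : ℝ} (hp : 1 ≤ p)
    {q : ℝ≥0∞} (hq : 1 ≤ q) (Nseq : ℕ → ℕ) {ρ : ℝ} (hρ : 0 < ρ) (hρp : ρ ≤ p)
    (hρq : ENNReal.ofReal ρ ≤ q) {f : G → R} (hf : ellNorm p (fun x => ‖f x‖ₑ) ≠ ⊤) :
    ellNorm p (fun x => sVarE q Nseq (fun N => ∑' y, K N y * f (x - y)))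
      ≤ ellNorm ρ (fun j => ENNReal.ofReal (∑ N ∈ Finset.Icc (Nseq j) (Nseq (j + 1)),
          ∑' y, ‖K (N + 1) y - K N y‖)) * ellNorm p (fun x => ‖f x‖ₑ) := by
  set D : ℕ → G → ℝ≥0∞ := fun j y =>
    ∑ N ∈ Finset.Ico (Nseq j) (Nseq (j + 1)), edist (K N y) (K (N + 1) y)
  set β : ℕ → ℝ≥0∞ := fun j => ENNReal.ofReal (∑ N ∈ Finset.Icc (Nseq j) (Nseq (j + 1)),
    ∑' y, ‖K (N + 1) y - K N y‖)
  have hYoung : ∀ j, ellNorm p (fun x => ∑' y, D j y * ‖f (x - y)‖ₑ)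
      ≤ ellNorm p (fun x => ‖f x‖ₑ) * β j := fun j =>
    calc _ ≤ (∑' y, D j y) * ellNorm p (fun x => ‖f x‖ₑ) := ellNorm_conv_le _ _ hp
      _ ≤ β j * ellNorm p (fun x => ‖f x‖ₑ) := mul_le_mul_left (tsum_sum_edist_le hK _ _) _
      _ = _ := mul_comm _ _
  calc ellNorm p (fun x => sVarE q Nseq (fun N => ∑' y, K N y * f (x - y)))
      ≤ ellNorm p (fun x => ellNorm ρ (fun j => ∑' y, D j y * ‖f (x - y)‖ₑ)) :=
        ellNorm_mono
          (sVarE_conv_le hK (norm_le_toReal_ellNorm f (by linarith) hf) hq Nseq hρ hρq)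
          (by linarith)
    _ ≤ ellNorm ρ (fun j => ellNorm p (fun x => ∑' y, D j y * ‖f (x - y)‖ₑ)) :=
        ellNorm_ellNorm_swap_le _ hρ hρp
    _ ≤ ellNorm ρ (fun j => ellNorm p (fun x => ‖f x‖ₑ) * β j) := ellNorm_mono hYoung hρ.le
    _ = _ := by rw [ellNorm_const_mul _ _ hρ, mul_comm]

end Convolution

theorem variation_short_lp_general (d : ℕ) (p : ℝ) (hp : 1 < p) (q : ℝ≥0∞)
    (hq : 1 < q) (Nseq : ℕ → ℕ)
    (K : ℕ → (Fin d → ℤ) → ℂ) (hK : ∀ N, Summable fun y => ‖K N y‖)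
    (hincr : (∑' k : ℕ,
        ENNReal.ofReal (∑ N ∈ Finset.Icc (Nseq k) (Nseq (k + 1)),
            ∑' y : Fin d → ℤ, ‖K (N + 1) y - K N y‖)
          ^ (min (ENNReal.ofReal p) q).toReal) ≠ ⊤) :
    ∃ C : ℝ≥0, ∀ f : (Fin d → ℤ) → ℂ,
      (∑' x : Fin d → ℤ,
          sVarE q Nseq (fun N => ∑' y : Fin d → ℤ, K N y * f (x - y)) ^ p) ^ (1 / p)
        ≤ C * (∑' x : Fin d → ℤ, (‖f x‖₊ : ℝ≥0∞) ^ p) ^ (1 / p) := by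
  obtain ⟨hρ, hρp, hρq⟩ := toReal_min_ofReal (by linarith) (zero_lt_one.trans hq)
  set C₀ := ellNorm (min (ENNReal.ofReal p) q).toReal fun k =>
    ENNReal.ofReal (∑ N ∈ Finset.Icc (Nseq k) (Nseq (k + 1)), ∑' y, ‖K (N + 1) y - K N y‖)
  have hC₀ : C₀ ≠ ⊤ := ENNReal.rpow_ne_top_of_nonneg (one_div_nonneg.mpr hρ.le) hincr
  refine ⟨C₀.toNNReal + 1, fun f => ?_⟩
  change _ ≤ _ * ellNorm p (fun x => ‖f x‖ₑ)
  rcases eq_or_ne (ellNorm p (fun x => ‖f x‖ₑ)) ⊤ with hf | hf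
  · simp [hf]
  refine (ellNorm_sVarE_conv_le hK hp.le hq.le Nseq hρ hρp hρq hf).trans ?_
  gcongr
  exact (ENNReal.coe_toNNReal hC₀).symm.le.trans (by gcongr; exact le_self_add)

/-- Short variation estimate: if the increments of the kernels `K_N ∈ ℓ¹(ℤ^d)` summed over
the blocks `[N_k, N_{k+1}]` form an `ℓ^{min(p,q)}` sequence, then the short `q`-variation of
`N ↦ K_N * f` with respect to `Z = {N_1 < N_2 < …}` is bounded on `ℓ^p(ℤ^d)`. -/
theorem variation_short_lp (d : ℕ) (hd : 1 ≤ d) (p : ℝ) (hp : 1 < p) (q : ℝ≥0∞)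
    (hq : 1 < q) (Nseq : ℕ → ℕ) (hN : StrictMono Nseq)
    (K : ℕ → (Fin d → ℤ) → ℂ) (hK : ∀ N, Summable fun y => ‖K N y‖)
    (hincr : (∑' k : ℕ,
        ENNReal.ofReal (∑ N ∈ Finset.Icc (Nseq k) (Nseq (k + 1)),
            ∑' y : Fin d → ℤ, ‖K (N + 1) y - K N y‖)
          ^ (min (ENNReal.ofReal p) q).toReal) ≠ ⊤) :
    ∃ C : ℝ≥0, ∀ f : (Fin d → ℤ) → ℂ,
      (∑' x : Fin d → ℤ,
          sVarE q Nseq (fun N => ∑' y : Fin d → ℤ, K N y * f (x - y)) ^ p) ^ (1 / p)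
        ≤ C * (∑' x : Fin d → ℤ, (‖f x‖₊ : ℝ≥0∞) ^ p) ^ (1 / p) :=
  variation_short_lp_general d p hp q hq Nseq K hK hincr
end

section
/- Let d ≥ 1. For every j with 1 ≤ j ≤ d there is a constant C = C(j, d) such that for all β = (β_1, …, β_d) ∈ ℝ^d with β_j ≠ 0 and all N > 0: |(1/N) ∫_0^N e(β_1 x + β_2 x² + ⋯ + β_d x^d) dx| ≤ C |β_j|^{−1/d} N^{−j/d}. -/
/-!
After the substitution `x = N y` the average becomes `∫₀¹ e(p(y)) dy` for the polynomial `p` with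
coefficients `β_i N^i`, so it suffices to bound this by `C_d |c|^{-1/d}` for any coefficient
`c = p_m`, `1 ≤ m ≤ d`. Put `δ = |c|^{1/d}`. The points where `p' = ±δ` or `p'' = 0` cut `[0, 1]`
into at most `3d + 1` intervals. On each of them either `|p'| ≥ δ` and `p'` is monotone, so van der
Corput's first-derivative test bounds the integral by `1/δ`, or `|p'| ≤ δ` throughout, and the
interval lies in the sublevel set `E = {|p'| ≤ δ}`. If `E` has measure `ε`, it contains `d` points
at mutual distance `≥ ε/d`; Lagrange interpolation at these points bounds the coefficient `m c` of
`p'` by `≲ δ ε^{1-d}`, i.e. `ε ≲ (δ/|c|)^{1/(d-1)} = |c|^{-1/d}`.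
-/

open MeasureTheory

/-- `e(x) = exp(2πix)`. -/
noncomputable def ce (x : ℝ) : ℂ := Complex.exp (Complex.I * (2 * Real.pi * x))

open Set Polynomial intervalIntegral

lemma norm_ce (x : ℝ) : ‖ce x‖ = 1 := by
  simp [ce, Complex.norm_exp]

lemma continuous_ce : Continuous ce := by
  unfold ce; fun_prop

lemma HasDerivAt.ce {φ : ℝ → ℝ} {φ' x : ℝ} (h : HasDerivAt φ φ' x) :
    HasDerivAt (fun t => _root_.ce (φ t)) (2 * Real.pi * Complex.I * φ' * _root_.ce (φ x)) x := by
  have := (h.ofReal_comp.const_mul (Complex.I * (2 * Real.pi))).cexp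
  simp only [mul_assoc] at this
  unfold _root_.ce
  convert this using 1
  simp only [mul_assoc]
  ring_nf

def SignConstOn (f : ℝ → ℝ) (s : Set ℝ) : Prop :=
  (∀ x ∈ s, 0 ≤ f x) ∨ ∀ x ∈ s, f x ≤ 0

lemma signConstOn_Icc_of_ne_zero {f : ℝ → ℝ} {u v : ℝ} (hf : ContinuousOn f (Icc u v))
    (h : ∀ x ∈ Ioo u v, f x ≠ 0) : SignConstOn f (Icc u v) := by
  by_contra hc
  simp only [SignConstOn, not_or, not_forall, not_le, exists_prop] at hc
  obtain ⟨⟨x, hx, hfx⟩, y, hy, hfy⟩ := hc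
  rcases le_total y x with hyx | hxy
  · obtain ⟨z, hz, hz0⟩ := intermediate_value_Ioo' hyx (hf.mono (Icc_subset_Icc hy.1 hx.2))
      ⟨hfx, hfy⟩
    exact h z ⟨hy.1.trans_lt hz.1, hz.2.trans_le hx.2⟩ hz0
  · obtain ⟨z, hz, hz0⟩ := intermediate_value_Ioo hxy (hf.mono (Icc_subset_Icc hx.1 hy.2))
      ⟨hfx, hfy⟩
    exact h z ⟨hx.1.trans_lt hz.1, hz.2.trans_le hy.2⟩ hz0

lemma Polynomial.signConstOn_eval_Icc (p : ℝ[X]) {u v : ℝ} (h : ∀ x ∈ Ioo u v, x ∉ p.roots) :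
    SignConstOn (fun x => p.eval x) (Icc u v) := by
  by_cases hp : p = 0
  · exact Or.inl fun x _ => by simp [hp]
  · exact signConstOn_Icc_of_ne_zero p.continuous.continuousOn fun x hx h0 =>
      h x hx ((mem_roots hp).2 h0)

lemma integral_abs_eq_abs_sub_of_hasDerivAt {w w' : ℝ → ℝ} {a b : ℝ} (hab : a ≤ b)
    (hw : ∀ x ∈ uIcc a b, HasDerivAt w (w' x) x) (hw' : IntervalIntegrable w' volume a b)
    (hsign : SignConstOn w' (Icc a b)) :
    ∫ x in a..b, |w' x| = |w b - w a| := by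
  rw [← integral_eq_sub_of_hasDerivAt hw hw']
  rcases hsign with h | h
  · rw [abs_of_nonneg (integral_nonneg hab h)]
    exact integral_congr fun x hx => abs_of_nonneg (h x (uIcc_of_le hab ▸ hx))
  · rw [← abs_neg, ← intervalIntegral.integral_neg,
      abs_of_nonneg (integral_nonneg hab fun x hx => neg_nonneg.2 (h x hx))]
    exact integral_congr fun x hx => abs_of_nonpos (h x (uIcc_of_le hab ▸ hx))

lemma norm_integral_smul_deriv_le {E : Type*} [NormedAddCommGroup E] [NormedSpace ℝ E]
    [CompleteSpace E] {w w' : ℝ → ℝ} {v v' : ℝ → E} {a b M : ℝ} (hab : a ≤ b)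
    (hw : ∀ x ∈ uIcc a b, HasDerivAt w (w' x) x) (hv : ∀ x ∈ uIcc a b, HasDerivAt v (v' x) x)
    (hw' : IntervalIntegrable w' volume a b) (hv' : IntervalIntegrable v' volume a b)
    (hw's : SignConstOn w' (Icc a b)) (hwM : ∀ x ∈ uIcc a b, |w x| ≤ M)
    (hv1 : ∀ x ∈ uIcc a b, ‖v x‖ ≤ 1) :
    ‖∫ x in a..b, w x • v' x‖ ≤ 4 * M := by
  have hsmul : ∀ {c : ℝ} {x : ℝ}, x ∈ uIcc a b → ‖c • v x‖ ≤ |c| := fun hx => by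
    rw [norm_smul, Real.norm_eq_abs]
    exact mul_le_of_le_one_right (abs_nonneg _) (hv1 _ hx)
  have hvar : ‖∫ x in a..b, w' x • v x‖ ≤ 2 * M := calc
    ‖∫ x in a..b, w' x • v x‖ ≤ ∫ x in a..b, |w' x| :=
      norm_integral_le_of_norm_le hab
        (ae_of_all _ fun x hx => hsmul (Icc_subset_uIcc (Ioc_subset_Icc_self hx)))
        hw'.abs
    _ = |w b - w a| := integral_abs_eq_abs_sub_of_hasDerivAt hab hw hw' hw's
    _ ≤ |w b| + |w a| := abs_sub _ _
    _ ≤ 2 * M := by linarith [hwM a left_mem_uIcc, hwM b right_mem_uIcc]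
  rw [integral_smul_deriv_eq_deriv_smul hw hv hw' hv']
  refine (norm_sub_le _ _).trans ((add_le_add ((norm_sub_le _ _).trans
    (add_le_add (hsmul right_mem_uIcc) (hsmul left_mem_uIcc))) hvar).trans ?_)
  linarith [hwM a left_mem_uIcc, hwM b right_mem_uIcc]

lemma norm_integral_ce_le_of_deriv {φ φ' φ'' : ℝ → ℝ} {a b δ : ℝ} (hab : a ≤ b) (hδ : 0 < δ)
    (hφ : ∀ x ∈ Icc a b, HasDerivAt φ (φ' x) x) (hφ' : ∀ x ∈ Icc a b, HasDerivAt φ' (φ'' x) x)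
    (hφ''c : ContinuousOn φ'' (Icc a b)) (hφ''s : SignConstOn φ'' (Icc a b))
    (hlow : ∀ x ∈ Icc a b, δ ≤ |φ' x|) :
    ‖∫ x in a..b, ce (φ x)‖ ≤ δ⁻¹ := by
  rw [← uIcc_of_le hab] at hφ hφ' hφ''c hlow
  have hne : ∀ x ∈ uIcc a b, φ' x ≠ 0 := fun x hx h => by
    have := hlow x hx; rw [h, abs_zero] at this; linarith
  -- `e(φ) = (2πi)⁻¹ (1/φ') (e ∘ φ)'`, and `(1/φ')' = -φ''/φ'²` has constant sign
  set w : ℝ → ℝ := fun x => (φ' x)⁻¹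
  set w' : ℝ → ℝ := fun x => -φ'' x / φ' x ^ 2
  set v' : ℝ → ℂ := fun x => 2 * Real.pi * Complex.I * φ' x * ce (φ x)
  have hw : ∀ x ∈ uIcc a b, HasDerivAt w (w' x) x := fun x hx => (hφ' x hx).inv (hne x hx)
  have hv : ∀ x ∈ uIcc a b, HasDerivAt (fun t => ce (φ t)) (v' x) x := fun x hx => (hφ x hx).ce
  have hφ'c : ContinuousOn φ' (uIcc a b) := fun x hx =>
    (hφ' x hx).continuousAt.continuousWithinAt
  have hw'c : ContinuousOn w' (uIcc a b) :=
    hφ''c.neg.div (hφ'c.pow 2) fun x hx => pow_ne_zero 2 (hne x hx)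
  have hv'c : ContinuousOn v' (uIcc a b) := by
    refine (continuousOn_const.mul (Complex.continuous_ofReal.comp_continuousOn hφ'c)).mul ?_
    exact continuous_ce.comp_continuousOn fun x hx => (hφ x hx).continuousAt.continuousWithinAt
  have hw's : SignConstOn w' (Icc a b) := by
    rcases hφ''s with h | h
    · exact Or.inr fun x hx =>
        div_nonpos_of_nonpos_of_nonneg (neg_nonpos.2 (h x hx)) (sq_nonneg _)
    · exact Or.inl fun x hx => div_nonneg (neg_nonneg.2 (h x hx)) (sq_nonneg _)
  have hce : ∫ x in a..b, ce (φ x) = (2 * Real.pi * Complex.I)⁻¹ * ∫ x in a..b, w x • v' x := by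
    rw [← intervalIntegral.integral_const_mul]
    refine integral_congr fun x hx => ?_
    simp only [w, v', Complex.real_smul, Complex.ofReal_inv]
    field_simp [hne x hx, Real.pi_ne_zero, Complex.I_ne_zero]
  have hparts := norm_integral_smul_deriv_le hab hw hv hw'c.intervalIntegrable
    hv'c.intervalIntegrable hw's
    (fun x hx => by simpa only [w, abs_inv] using inv_anti₀ hδ (hlow x hx))
    fun x _ => (norm_ce _).le
  have hnorm : ‖2 * (Real.pi : ℂ) * Complex.I‖ = 2 * Real.pi := by
    simp [abs_of_pos Real.pi_pos]
  rw [hce, norm_mul, norm_inv, hnorm]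
  calc (2 * Real.pi)⁻¹ * ‖∫ x in a..b, w x • v' x‖ ≤ (2 * Real.pi)⁻¹ * (4 * δ⁻¹) := by gcongr
    _ ≤ δ⁻¹ := by
        rw [inv_mul_le_iff₀ (by positivity)]
        nlinarith [Real.pi_gt_three, inv_pos.2 hδ]

lemma intervalIntegrable_indicator_one {B : Set ℝ} (hB : MeasurableSet B) (u v : ℝ) :
    IntervalIntegrable (B.indicator (1 : ℝ → ℝ)) volume u v :=
  ⟨(integrableOn_const (C := (1 : ℝ)) measure_Ioc_lt_top.ne).indicator hB,
    (integrableOn_const (C := (1 : ℝ)) measure_Ioc_lt_top.ne).indicator hB⟩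

lemma norm_integral_ce_le_of_signConstOn {φ φ' φ'' : ℝ → ℝ} {u v δ : ℝ} (huv : u ≤ v)
    (hδ : 0 < δ) (hφ : ∀ x, HasDerivAt φ (φ' x) x) (hφ' : ∀ x, HasDerivAt φ' (φ'' x) x)
    (hφ''c : Continuous φ'') (hφ''s : SignConstOn φ'' (Icc u v))
    (hlo : SignConstOn (fun x => φ' x - δ) (Icc u v))
    (hhi : SignConstOn (fun x => φ' x + δ) (Icc u v)) :
    ‖∫ x in u..v, ce (φ x)‖ ≤ δ⁻¹ + ∫ x in u..v, {x | |φ' x| ≤ δ}.indicator 1 x := by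
  set B := {x | |φ' x| ≤ δ}
  have hφ'c : Continuous φ' := continuous_iff_continuousAt.2 fun x => (hφ' x).continuousAt
  have hBm : MeasurableSet B :=
    (isClosed_le (continuous_abs.comp hφ'c) continuous_const).measurableSet
  have hBint := intervalIntegrable_indicator_one hBm u v
  have hB0 : 0 ≤ ∫ x in u..v, B.indicator (1 : ℝ → ℝ) x :=
    integral_nonneg huv fun x _ => indicator_nonneg (fun _ _ => zero_le_one) x
  have hvdc : (∀ x ∈ Icc u v, δ ≤ |φ' x|) →
      ‖∫ x in u..v, ce (φ x)‖ ≤ δ⁻¹ + ∫ x in u..v, B.indicator 1 x := fun h =>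
    (norm_integral_ce_le_of_deriv huv hδ (fun x _ => hφ x) (fun x _ => hφ' x)
      hφ''c.continuousOn hφ''s h).trans (le_add_of_nonneg_right hB0)
  rcases hlo with hlo | hlo <;> beta_reduce at hlo
  · exact hvdc fun x hx => (le_abs_self _).trans' (by linarith [hlo x hx])
  rcases hhi with hhi | hhi <;> beta_reduce at hhi
  · refine (norm_integral_le_of_norm_le huv (ae_of_all _ fun x hx => ?_) hBint).trans
      (le_add_of_nonneg_left (inv_nonneg.2 hδ.le))
    have hxB : x ∈ B := show |φ' x| ≤ δ from abs_le.2
      ⟨by linarith [hhi x (Ioc_subset_Icc_self hx)], by linarith [hlo x (Ioc_subset_Icc_self hx)]⟩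
    rw [norm_ce, indicator_of_mem hxB, Pi.one_apply]
  · exact hvdc fun x hx => (neg_le_abs _).trans' (by linarith [hhi x hx])

lemma norm_integral_le_of_forall_pieces {E : Type*} [NormedAddCommGroup E] [NormedSpace ℝ E]
    {f : ℝ → E} {g : ℝ → ℝ} {A a : ℝ} (hf : ∀ u v, IntervalIntegrable f volume u v)
    (hg : ∀ u v, IntervalIntegrable g volume u v) (Z : Finset ℝ) {b : ℝ} (hab : a ≤ b)
    (hpiece : ∀ u v, a ≤ u → u ≤ v → v ≤ b → (∀ z ∈ Z, z ∉ Ioo u v) →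
      ‖∫ x in u..v, f x‖ ≤ A + ∫ x in u..v, g x) :
    ‖∫ x in a..b, f x‖ ≤ (Z.card + 1) * A + ∫ x in a..b, g x := by
  have hA : 0 ≤ A := by simpa using hpiece a a le_rfl le_rfl hab (by simp)
  induction Z using Finset.induction_on_max generalizing b with
  | empty => simpa using hpiece a b le_rfl hab le_rfl (by simp)
  | insert z Z hlt ih =>
    rw [Finset.card_insert_of_notMem fun h => lt_irrefl _ (hlt z h)]
    by_cases hz : z ∈ Ioo a b
    · have hleft := ih hz.1.le fun u v hau huv hvz hZ => hpiece u v hau huv (hvz.trans hz.2.le) <|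
        (Finset.forall_mem_insert _ _ _).2 ⟨fun h => h.2.not_ge hvz, hZ⟩
      have hright := hpiece z b hz.1.le hz.2.le le_rfl <|
        (Finset.forall_mem_insert _ _ _).2 ⟨fun h => h.1.false, fun y hy h => (hlt y hy).not_gt h.1⟩
      rw [← integral_add_adjacent_intervals (hf a z) (hf z b),
        ← integral_add_adjacent_intervals (hg a z) (hg z b)]
      refine (norm_add_le _ _).trans ?_
      push_cast
      linarith
    · have := ih hab fun u v hau huv hvb hZ => hpiece u v hau huv hvb <|
        (Finset.forall_mem_insert _ _ _).2 ⟨fun h => hz ⟨hau.trans_lt h.1, h.2.trans_le hvb⟩, hZ⟩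
      push_cast
      linarith

lemma norm_integral_ce_eval_le (p : ℝ[X]) {δ : ℝ} (hδ : 0 < δ) :
    ‖∫ x in (0 : ℝ)..1, ce (p.eval x)‖ ≤ (3 * p.natDegree + 1) * δ⁻¹ +
      volume.real {x ∈ Icc (0 : ℝ) 1 | |p.derivative.eval x| ≤ δ} := by
  set q := derivative p
  set Z := ((q - C δ).roots + (q + C δ).roots + (derivative q).roots).toFinset
  have hZ : Z.card ≤ 3 * p.natDegree := by
    have hq : q.natDegree ≤ p.natDegree := natDegree_derivative_le p |>.trans (Nat.sub_le _ _)
    refine (Multiset.toFinset_card_le _).trans ?_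
    simp only [Multiset.card_add]
    have h1 := card_roots' (q - C δ)
    have h2 := card_roots' (q + C δ)
    have h3 := card_roots' (derivative q)
    have h4 := natDegree_derivative_le q
    rw [natDegree_sub_C] at h1
    rw [natDegree_add_C] at h2
    omega
  set B := {x | |q.eval x| ≤ δ}
  have hBm : MeasurableSet B :=
    (isClosed_le (continuous_abs.comp q.continuous) continuous_const).measurableSet
  have hsign : ∀ f ∈ [q - C δ, q + C δ, derivative q], ∀ u v, (∀ z ∈ Z, z ∉ Ioo u v) →
      SignConstOn (fun x => f.eval x) (Icc u v) := by
    intro f hf u v hZuv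
    refine f.signConstOn_eval_Icc fun x hx hroot => hZuv x ?_ hx
    simp only [List.mem_cons, List.not_mem_nil, or_false] at hf
    rcases hf with rfl | rfl | rfl <;> simp [Z, hroot]
  have hsplit := norm_integral_le_of_forall_pieces (A := δ⁻¹) (g := B.indicator 1)
    (fun u v => (continuous_ce.comp p.continuous).intervalIntegrable u v)
    (intervalIntegrable_indicator_one hBm)
    Z zero_le_one fun u v _ huv _ hZuv =>
      norm_integral_ce_le_of_signConstOn huv hδ (fun x => p.hasDerivAt x) (fun x => q.hasDerivAt x)
        (derivative q).continuous (hsign _ (by simp) u v hZuv)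
        (by simpa using hsign (q - C δ) (by simp) u v hZuv)
        (by simpa using hsign (q + C δ) (by simp) u v hZuv)
  have hbad : ∫ x in (0 : ℝ)..1, B.indicator 1 x ≤
      volume.real {x ∈ Icc (0 : ℝ) 1 | |q.eval x| ≤ δ} := by
    rw [integral_of_le zero_le_one, integral_indicator_one hBm, measureReal_restrict_apply hBm]
    exact measureReal_mono (fun x hx => ⟨Ioc_subset_Icc_self hx.2, hx.1⟩)
      ((measure_mono (sep_subset _ _)).trans_lt measure_Icc_lt_top).ne
  have hcard : (Z.card + 1 : ℝ) ≤ 3 * p.natDegree + 1 := by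
    exact_mod_cast Nat.add_le_add_right hZ 1
  refine hsplit.trans (add_le_add ?_ hbad)
  gcongr

lemma abs_coeff_prod_X_sub_C_le {ι : Type*} (s : Finset ι) (v : ι → ℝ) (k : ℕ) :
    |(∏ i ∈ s, (X - C (v i))).coeff k| ≤ ∏ i ∈ s, (1 + |v i|) := by
  classical
  induction s using Finset.induction_on generalizing k with
  | empty => rw [Finset.prod_empty, Finset.prod_empty, coeff_one]; split_ifs <;> simp
  | insert a s ha ih =>
    set P := ∏ i ∈ s, (X - C (v i))
    have hXP : |(X * P).coeff k| ≤ ∏ i ∈ s, (1 + |v i|) := by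
      cases k with
      | zero => simpa using (ih 0).trans' (abs_nonneg _)
      | succ k => rw [coeff_X_mul]; exact ih k
    rw [Finset.prod_insert ha, Finset.prod_insert ha, sub_mul, coeff_sub, coeff_C_mul]
    calc |(X * P).coeff k - v a * P.coeff k|
        ≤ |(X * P).coeff k| + |v a| * |P.coeff k| := by rw [← abs_mul]; exact abs_sub _ _
      _ ≤ (1 + |v a|) * ∏ i ∈ s, (1 + |v i|) := by
        nlinarith [ih k, abs_nonneg (v a)]

lemma abs_coeff_basis_mul_pow_le {ι : Type*} [DecidableEq ι] {s : Finset ι} {x : ι → ℝ} {ρ : ℝ}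
    {i : ι} (hρ : 0 < ρ) (hx : ∀ j ∈ s, |x j| ≤ 1) (hsep : ∀ j ∈ s, j ≠ i → ρ ≤ |x i - x j|)
    (k : ℕ) :
    |(Lagrange.basis s x i).coeff k| * ρ ^ (s.erase i).card ≤ 2 ^ (s.erase i).card := by
  have hbasis : Lagrange.basis s x i =
      C (∏ j ∈ s.erase i, (x i - x j)⁻¹) * ∏ j ∈ s.erase i, (X - C (x j)) := by
    rw [Lagrange.basis, map_prod, ← Finset.prod_mul_distrib]
    rfl
  have hscale : |∏ j ∈ s.erase i, (x i - x j)⁻¹| * ρ ^ (s.erase i).card ≤ 1 := by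
    rw [Finset.abs_prod, ← Finset.prod_const, ← Finset.prod_mul_distrib]
    refine Finset.prod_le_one (fun j _ => by positivity) fun j hj => ?_
    have hρj := hsep j (Finset.mem_of_mem_erase hj) (Finset.ne_of_mem_erase hj)
    rw [abs_inv, inv_mul_le_one₀ (hρ.trans_le hρj)]
    exact hρj
  have hprod : |(∏ j ∈ s.erase i, (X - C (x j))).coeff k| ≤ 2 ^ (s.erase i).card := by
    refine (abs_coeff_prod_X_sub_C_le _ _ k).trans ?_
    rw [← Finset.prod_const]
    exact Finset.prod_le_prod (fun j _ => by positivity) fun j hj => by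
      linarith [hx j (Finset.mem_of_mem_erase hj)]
  rw [hbasis, coeff_C_mul, abs_mul, mul_right_comm]
  calc |∏ j ∈ s.erase i, (x i - x j)⁻¹| * ρ ^ (s.erase i).card *
        |(∏ j ∈ s.erase i, (X - C (x j))).coeff k|
      ≤ 1 * 2 ^ (s.erase i).card := by gcongr
    _ = 2 ^ (s.erase i).card := one_mul _

lemma abs_coeff_mul_pow_le_of_separated {n : ℕ} {Q : ℝ[X]} (hQ : Q.natDegree ≤ n)
    {x : Fin (n + 1) → ℝ} {ρ δ : ℝ} (hρ : 0 < ρ) (hx : ∀ i, |x i| ≤ 1)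
    (hsep : ∀ i j, i ≠ j → ρ ≤ |x i - x j|) (hQx : ∀ i, |Q.eval (x i)| ≤ δ) (k : ℕ) :
    |Q.coeff k| * ρ ^ n ≤ (n + 1) * 2 ^ n * δ := by
  have hinj : Set.InjOn x (Finset.univ : Finset (Fin (n + 1))) := fun i _ j _ hij => by
    by_contra hne
    have := hsep i j hne
    rw [hij, sub_self, abs_zero] at this
    exact this.not_gt hρ
  have hdeg : Q.degree < (Finset.univ : Finset (Fin (n + 1))).card := by
    rw [Finset.card_univ, Fintype.card_fin]
    exact (degree_le_natDegree.trans_lt (WithBot.coe_lt_coe.2 (Nat.lt_succ_of_le hQ)))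
  have hcard : ∀ i : Fin (n + 1), (Finset.univ.erase i).card = n := fun i => by simp
  rw [Lagrange.eq_interpolate hinj hdeg, Lagrange.interpolate_apply, finsetSum_coeff]
  calc |∑ i, (C (Q.eval (x i)) * Lagrange.basis Finset.univ x i).coeff k| * ρ ^ n
      ≤ ∑ i, |Q.eval (x i)| * (|(Lagrange.basis Finset.univ x i).coeff k| * ρ ^ n) := by
        refine (mul_le_mul_of_nonneg_right (Finset.abs_sum_le_sum_abs _ _) (by positivity)).trans ?_
        rw [Finset.sum_mul]
        exact Finset.sum_le_sum fun i _ => by rw [coeff_C_mul, abs_mul, mul_assoc]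
    _ ≤ ∑ _i : Fin (n + 1), δ * 2 ^ n := by
        refine Finset.sum_le_sum fun i _ => ?_
        have := abs_coeff_basis_mul_pow_le (s := Finset.univ) (i := i) hρ (fun j _ => hx j)
          (fun j _ hji => hsep i j hji.symm) k
        rw [hcard] at this
        exact mul_le_mul (hQx i) this (by positivity) ((abs_nonneg _).trans (hQx i))
    _ = (n + 1) * 2 ^ n * δ := by simp; ring

lemma lipschitzWith_measureReal_inter_Iic {E : Set ℝ} (hE : volume E ≠ ⊤) :
    LipschitzWith 1 fun t => volume.real (E ∩ Iic t) := by
  refine LipschitzWith.of_le_add fun s t => ?_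
  have hsub : E ∩ Iic s ⊆ (E ∩ Iic t) ∪ Ioc t s := fun z hz => by
    rcases le_or_gt z t with h | h
    · exact Or.inl ⟨hz.1, h⟩
    · exact Or.inr ⟨h, hz.2⟩
  have hfin : volume ((E ∩ Iic t) ∪ Ioc t s) ≠ ⊤ :=
    measure_union_ne_top (measure_ne_top_of_subset inter_subset_left hE) measure_Ioc_lt_top.ne
  calc volume.real (E ∩ Iic s) ≤ volume.real ((E ∩ Iic t) ∪ Ioc t s) := measureReal_mono hsub hfin
    _ ≤ volume.real (E ∩ Iic t) + volume.real (Ioc t s) := measureReal_union_le _ _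
    _ ≤ volume.real (E ∩ Iic t) + dist s t := by
        rw [Real.volume_real_Ioc, Real.dist_eq]
        gcongr
        exact max_le (le_abs_self _) (abs_nonneg _)

lemma exists_mem_measureReal_inter_Iic_eq {E : Set ℝ} (hE : IsCompact E) {v : ℝ} (hv : 0 < v)
    (hvE : v ≤ volume.real E) : ∃ x ∈ E, volume.real (E ∩ Iic x) = v := by
  set F : ℝ → ℝ := fun t => volume.real (E ∩ Iic t)
  obtain ⟨a, ha⟩ := hE.bddBelow
  obtain ⟨b, hb⟩ := hE.bddAbove
  have hFa : F (a - 1) = 0 := by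
    have : E ∩ Iic (a - 1) = ∅ := eq_empty_of_forall_notMem fun z hz => by
      linarith [ha hz.1, show z ≤ a - 1 from hz.2]
    simp [F, this]
  have hFb : F b = volume.real E := by
    simp only [F]
    rw [inter_eq_left.2 (show E ⊆ Iic b from fun z hz => hb hz)]
  have hFc : Continuous F := (lipschitzWith_measureReal_inter_Iic hE.measure_lt_top.ne).continuous
  obtain ⟨t, -, hFt⟩ := intermediate_value_uIcc hFc.continuousOn
    (show v ∈ uIcc (F (a - 1)) (F b) from hFa ▸ hFb ▸ mem_uIcc_of_le hv.le hvE)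
  -- replace `t` by the last point of `E` below it
  set S := E ∩ Iic t
  have hSc : IsCompact S := hE.inter_right isClosed_Iic
  have hSne : S.Nonempty := nonempty_of_measure_ne_zero (μ := volume) fun h =>
    hv.ne' (hFt.symm.trans (show volume.real S = 0 by rw [measureReal_def, h, ENNReal.toReal_zero]))
  obtain ⟨hxE, hxt⟩ := hSc.sSup_mem hSne
  refine ⟨sSup S, hxE, ?_⟩
  have : E ∩ Iic (sSup S) = S := Subset.antisymm (fun z hz => ⟨hz.1, mem_Iic.2 (le_trans hz.2 hxt)⟩)
    fun z hz => ⟨hz.1, le_csSup hSc.bddAbove hz⟩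
  rw [this]
  exact hFt

lemma exists_separated_points_of_isCompact {E : Set ℝ} (hE : IsCompact E)
    (hpos : 0 < volume.real E) (n : ℕ) :
    ∃ x : Fin (n + 1) → ℝ, (∀ i, x i ∈ E) ∧
      ∀ i j, i ≠ j → volume.real E / (n + 1) ≤ |x i - x j| := by
  set ρ := volume.real E / (n + 1)
  have hρ : 0 < ρ := by positivity
  have hpt : ∀ i : Fin (n + 1), ∃ x ∈ E, volume.real (E ∩ Iic x) = (i + 1) * ρ := fun i =>
    exists_mem_measureReal_inter_Iic_eq hE (by positivity) <| by
      rw [← mul_div_cancel_left₀ (volume.real E) (by positivity : (n + 1 : ℝ) ≠ 0), mul_div_assoc]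
      gcongr
      exact_mod_cast i.is_le
  choose x hxE hxF using hpt
  refine ⟨x, hxE, fun i j hij => ?_⟩
  have hlip := (lipschitzWith_measureReal_inter_Iic hE.measure_lt_top.ne).dist_le_mul (x i) (x j)
  rw [Real.dist_eq, Real.dist_eq, hxF, hxF, NNReal.coe_one, one_mul, ← sub_mul, abs_mul,
    abs_of_pos hρ] at hlip
  refine le_trans ?_ hlip
  refine le_mul_of_one_le_left hρ.le ?_
  rw [add_sub_add_right_eq_sub, le_abs]
  rcases lt_or_gt_of_ne (Fin.val_ne_of_ne hij) with h | h
  · right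
    have : ((i : ℕ) : ℝ) + 1 ≤ j := by exact_mod_cast h
    linarith
  · left
    have : ((j : ℕ) : ℝ) + 1 ≤ i := by exact_mod_cast h
    linarith

lemma measureReal_sublevel_pow_mul_abs_coeff_le {n : ℕ} (hn : n ≠ 0) {Q : ℝ[X]}
    (hQ : Q.natDegree ≤ n) {δ : ℝ} (hδ : 0 ≤ δ) (k : ℕ) :
    volume.real {x ∈ Icc (0 : ℝ) 1 | |Q.eval x| ≤ δ} ^ n * |Q.coeff k| ≤
      (n + 1) ^ (n + 1) * 2 ^ n * δ := by
  set E := {x ∈ Icc (0 : ℝ) 1 | |Q.eval x| ≤ δ}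
  rcases measureReal_nonneg.eq_or_lt with h0 | hpos
  · rw [← h0, zero_pow hn, zero_mul]
    positivity
  have hE : IsCompact E := isCompact_Icc.inter_right <|
    isClosed_le (continuous_abs.comp Q.continuous) continuous_const
  obtain ⟨x, hxE, hsep⟩ := exists_separated_points_of_isCompact hE hpos n
  have hcoeff := abs_coeff_mul_pow_le_of_separated hQ (by positivity)
    (fun i => abs_le.2 ⟨by linarith [(hxE i).1.1], by linarith [(hxE i).1.2]⟩) hsep
    (fun i => (hxE i).2) k
  calc volume.real E ^ n * |Q.coeff k|
      = (n + 1) ^ n * (|Q.coeff k| * (volume.real E / (n + 1)) ^ n) := by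
        rw [div_pow]; field_simp
    _ ≤ (n + 1) ^ n * ((n + 1) * 2 ^ n * δ) := by gcongr
    _ = (n + 1) ^ (n + 1) * 2 ^ n * δ := by ring

lemma measureReal_sublevel_derivative_le {d : ℕ} (hd : 2 ≤ d) {p : ℝ[X]} (hp : p.natDegree ≤ d)
    {m : ℕ} (hm : 1 ≤ m) {t : ℝ} (ht : 0 < t) (htc : t ^ d * |p.coeff m| = 1) :
    volume.real {x ∈ Icc (0 : ℝ) 1 | |p.derivative.eval x| ≤ t⁻¹} ≤
      (d : ℝ) ^ d * 2 ^ (d - 1) * t := by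
  obtain ⟨n, rfl⟩ : ∃ n, d = n + 1 := ⟨d - 1, by omega⟩
  have hn : n ≠ 0 := by omega
  rw [Nat.add_sub_cancel]
  push_cast
  set ε := volume.real {x ∈ Icc (0 : ℝ) 1 | |p.derivative.eval x| ≤ t⁻¹}
  set K : ℝ := (n + 1) ^ (n + 1) * 2 ^ n
  have hK : 1 ≤ K := one_le_mul_of_one_le_of_one_le
    (one_le_pow₀ (by linarith [(Nat.cast_nonneg n : (0 : ℝ) ≤ n)])) (one_le_pow₀ (by norm_num))
  have hcoeff : |p.coeff m| ≤ |p.derivative.coeff (m - 1)| := by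
    rw [coeff_derivative, Nat.sub_add_cancel hm, abs_mul]
    refine le_mul_of_one_le_right (abs_nonneg _) ?_
    rw [abs_of_pos (by positivity)]
    exact le_add_of_nonneg_left (Nat.cast_nonneg _)
  have hsub := measureReal_sublevel_pow_mul_abs_coeff_le hn
    ((natDegree_derivative_le p).trans (Nat.sub_le_sub_right hp 1)) (inv_nonneg.2 ht.le) (m - 1)
  have hpow : ε ^ n ≤ (K * t) ^ n := calc
    ε ^ n = t ^ (n + 1) * (ε ^ n * |p.coeff m|) := by rw [mul_left_comm, htc, mul_one]
    _ ≤ t ^ (n + 1) * (K * t⁻¹) :=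
      mul_le_mul_of_nonneg_left ((mul_le_mul_of_nonneg_left hcoeff (by positivity)).trans hsub)
        (by positivity)
    _ = K * t ^ n := by rw [pow_succ]; field_simp
    _ ≤ (K * t) ^ n := by rw [mul_pow]; gcongr; exact le_self_pow₀ hK hn
  exact (pow_le_pow_iff_left₀ measureReal_nonneg (by positivity) hn).1 hpow

lemma norm_integral_ce_eval_le_of_natDegree_le_one {p : ℝ[X]} (hp : p.natDegree ≤ 1)
    (hc : p.coeff 1 ≠ 0) : ‖∫ x in (0 : ℝ)..1, ce (p.eval x)‖ ≤ |p.coeff 1|⁻¹ := by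
  have hp' : derivative p = C (p.coeff 1) := by
    rw [eq_X_add_C_of_natDegree_le_one hp]; simp
  refine norm_integral_ce_le_of_deriv zero_le_one (abs_pos.2 hc) (fun x _ => p.hasDerivAt x)
    (fun x _ => (derivative p).hasDerivAt x) (derivative (derivative p)).continuous.continuousOn
    (Or.inl fun x _ => by simp [hp']) fun x _ => by simp [hp']

lemma norm_integral_ce_eval_le_rpow {d : ℕ} {p : ℝ[X]} (hp : p.natDegree ≤ d) {m : ℕ} (hm : 1 ≤ m)
    (hmd : m ≤ d) (hc : p.coeff m ≠ 0) :
    ‖∫ x in (0 : ℝ)..1, ce (p.eval x)‖ ≤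
      (3 * d + 1 + (d : ℝ) ^ d * 2 ^ (d - 1)) * |p.coeff m| ^ (-(1 / d : ℝ)) := by
  have hc' : 0 < |p.coeff m| := abs_pos.2 hc
  -- for `d = 1` the sublevel-set bound is void (`p'` is constant), but the phase is linear
  rcases (by omega : d = 1 ∨ 2 ≤ d) with rfl | hd
  · obtain rfl : m = 1 := by omega
    norm_num [Real.rpow_neg_one]
    exact (norm_integral_ce_eval_le_of_natDegree_le_one hp hc).trans
      (le_mul_of_one_le_left (inv_nonneg.2 hc'.le) (by norm_num))
  set t := |p.coeff m| ^ (-(1 / d : ℝ))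
  have ht : 0 < t := Real.rpow_pos_of_pos hc' _
  have htc : t ^ d * |p.coeff m| = 1 := by
    rw [← Real.rpow_natCast, ← Real.rpow_mul hc'.le, neg_mul, one_div_mul_cancel (by positivity),
      Real.rpow_neg_one, inv_mul_cancel₀ hc'.ne']
  calc ‖∫ x in (0 : ℝ)..1, ce (p.eval x)‖
      ≤ (3 * p.natDegree + 1) * t⁻¹⁻¹ +
          volume.real {x ∈ Icc (0 : ℝ) 1 | |p.derivative.eval x| ≤ t⁻¹} :=
        norm_integral_ce_eval_le p (inv_pos.2 ht)
    _ ≤ (3 * d + 1) * t + (d : ℝ) ^ d * 2 ^ (d - 1) * t := by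
        rw [inv_inv]
        gcongr
        exact measureReal_sublevel_derivative_le hd hp hm ht htc
    _ = (3 * d + 1 + (d : ℝ) ^ d * 2 ^ (d - 1)) * t := by ring

noncomputable def phasePoly {d : ℕ} (β : Fin d → ℝ) : ℝ[X] :=
  ∑ i, C (β i) * X ^ ((i : ℕ) + 1)

lemma eval_phasePoly {d : ℕ} (β : Fin d → ℝ) (x : ℝ) :
    (phasePoly β).eval x = ∑ i, β i * x ^ ((i : ℕ) + 1) := by
  simp [phasePoly, eval_finsetSum]

lemma coeff_phasePoly_succ {d : ℕ} (β : Fin d → ℝ) (j : Fin d) :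
    (phasePoly β).coeff ((j : ℕ) + 1) = β j := by
  simp [phasePoly, finsetSum_coeff, coeff_X_pow, Fin.val_inj]

lemma natDegree_phasePoly_le {d : ℕ} (β : Fin d → ℝ) : (phasePoly β).natDegree ≤ d :=
  natDegree_sum_le_of_forall_le _ _ fun i _ =>
    (natDegree_C_mul_X_pow_le _ _).trans i.isLt

theorem oscillatory_integral_curve_bound_general (d : ℕ) (j : Fin d) :
    ∃ C : ℝ, ∀ β : Fin d → ℝ, β j ≠ 0 → ∀ N : ℝ, 0 < N →
      ‖(N : ℂ)⁻¹ * ∫ x in (0 : ℝ)..N, ce (∑ i, β i * x ^ ((i : ℕ) + 1))‖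
        ≤ C * |β j| ^ (-(1 / d : ℝ)) * N ^ (-(((j : ℕ) + 1 : ℝ) / d)) := by
  refine ⟨3 * d + 1 + (d : ℝ) ^ d * 2 ^ (d - 1), fun β hβ N hN => ?_⟩
  set β' : Fin d → ℝ := fun i => β i * N ^ ((i : ℕ) + 1)
  have hrescale : (N : ℂ)⁻¹ * ∫ x in (0 : ℝ)..N, ce (∑ i, β i * x ^ ((i : ℕ) + 1)) =
      ∫ x in (0 : ℝ)..1, ce ((phasePoly β').eval x) := by
    simp_rw [eval_phasePoly, β', mul_assoc, ← mul_pow]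
    rw [intervalIntegral.integral_comp_mul_left (fun y => ce (∑ i, β i * y ^ ((i : ℕ) + 1))) hN.ne']
    simp [Complex.real_smul]
  have hβ' : (phasePoly β').coeff ((j : ℕ) + 1) ≠ 0 := by
    rw [coeff_phasePoly_succ]; exact mul_ne_zero hβ (by positivity)
  rw [hrescale]
  refine (norm_integral_ce_eval_le_rpow (natDegree_phasePoly_le β') j.val.succ_pos j.isLt
    hβ').trans_eq ?_
  rw [coeff_phasePoly_succ, abs_mul, abs_of_pos (by positivity : 0 < N ^ ((j : ℕ) + 1)),
    Real.mul_rpow (abs_nonneg _) (by positivity), ← Real.rpow_natCast N, ← Real.rpow_mul hN.le]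
  push_cast
  ring_nf

/-- Van der Corput bound for the oscillatory integral `(1/N) ∫_0^N e(β₁x + ⋯ + β_d x^d) dx`:
for each `1 ≤ j ≤ d` (here `j : Fin d` encodes the exponent `j+1`) it is bounded by
`C(j,d) |β_j|^{-1/d} N^{-j/d}`. -/
theorem oscillatory_integral_curve_bound (d : ℕ) (hd : 1 ≤ d) (j : Fin d) :
    ∃ C : ℝ, ∀ β : Fin d → ℝ, β j ≠ 0 → ∀ N : ℝ, 0 < N →
      ‖(N : ℂ)⁻¹ * ∫ x in (0 : ℝ)..N, ce (∑ i, β i * x ^ ((i : ℕ) + 1))‖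
        ≤ C * |β j| ^ (-(1 / d : ℝ)) * N ^ (-(((j : ℕ) + 1 : ℝ) / d)) :=
  oscillatory_integral_curve_bound_general d j
end
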